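/- Let ℓ ≠ 0 and h be real, and suppose there exist −1 < x₋ < x₊ < 1 with P_{h,ℓ}(x₋) = P_{h,ℓ}(x₊) = 0, P_{h,ℓ} > 0 on (x₋, x₊), P_{h,ℓ} < 0 on (−1, x₋) ∪ (x₊, 1), and the derivative of P_{h,ℓ} is strictly positive at x₋ and strictly negative at x₊ (simple roots). Then the function h' ↦ F(h',ℓ) = ∫_{−1}^{1} √(max(2(h'−x)(1−x²) − ℓ², 0))/(1−x²) dx has derivative at h equal to ∫_{x₋}^{x₊} (P_{h,ℓ}(x))^{−1/2} dx. -/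

import Mathlib

/-!
Write the integrand at energy `k` as `√(P_{h,ℓ}(x) + 2 (k - h) (1 - x²)) / (1 - x²)` and split
`[-1, 1]` at the simple roots `x₋ < x₊`. On `[x₋, x₊]` the difference quotients in `k` are bounded
by `2 / √P_{h,ℓ}`, which is integrable because `P_{h,ℓ}` vanishes only linearly at its roots, so
dominated convergence gives the derivative `∫ P_{h,ℓ}^{-1/2}`. On each outer piece
`P_{h,ℓ}(x) ≤ -c |x - x_±|`, so the integrand at energy `k` is `O(√|k - h|)` and supported within
`(2 / c) |k - h|` of the root: these pieces are `O(|k - h|^{3/2})` and contribute nothing.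
Since `ℓ ≠ 0`, the factor `1 - x²` stays away from `0` wherever the integrand is nonzero.
-/

open MeasureTheory Set Filter Topology Metric Interval

theorem Real.sqrt_max_zero (x : ℝ) : √(max x 0) = √x := by
  rcases le_total x 0 with hx | hx
  · rw [max_eq_right hx, Real.sqrt_zero, Real.sqrt_eq_zero'.2 hx]
  · rw [max_eq_left hx]

theorem Real.abs_sqrt_sub_sqrt_le {a : ℝ} (ha : 0 < a) (b : ℝ) : |√b - √a| ≤ |b - a| / √a := by
  rw [le_div_iff₀ (Real.sqrt_pos.2 ha)]
  calc |√b - √a| * √a ≤ |√b - √a| * (√b + √a) := by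
        gcongr; exact le_add_of_nonneg_left (Real.sqrt_nonneg b)
    _ = |max b 0 - max a 0| := by
        rw [← Real.sq_sqrt', ← Real.sq_sqrt', ← abs_of_nonneg (by positivity : 0 ≤ √b + √a),
          ← abs_mul]
        ring_nf
    _ ≤ |b - a| := abs_max_sub_max_le_abs b a 0

theorem exists_pos_mul_abs_sub_le_abs {f : ℝ → ℝ} {K : Set ℝ} {x₀ d : ℝ} (hK : IsCompact K)
    (hf : ContinuousOn f K) (hd : HasDerivAt f d x₀) (hd0 : d ≠ 0) (hx₀ : f x₀ = 0)
    (hne : ∀ x ∈ K, x ≠ x₀ → f x ≠ 0) :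
    ∃ c > 0, ∀ x ∈ K, c * |x - x₀| ≤ |f x| := by
  rcases K.eq_empty_or_nonempty with rfl | hKne
  · exact ⟨1, one_pos, by simp⟩
  have hslope : ContinuousOn (fun x => |dslope f x₀ x|) K := by
    refine continuous_abs.comp_continuousOn fun x hx => ?_
    rcases eq_or_ne x x₀ with rfl | hx'
    · exact (continuousAt_dslope_same.2 hd.differentiableAt).continuousWithinAt
    · exact (continuousWithinAt_dslope_of_ne hx').2 (hf x hx)
  have hslope_ne : ∀ x ∈ K, dslope f x₀ x ≠ 0 := by
    intro x hx
    rcases eq_or_ne x x₀ with rfl | hx'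
    · rwa [dslope_same, hd.deriv]
    · rw [dslope_of_ne _ hx', slope_def_field, hx₀, sub_zero]
      exact div_ne_zero (hne x hx hx') (sub_ne_zero.2 hx')
  obtain ⟨y, hy, hmin⟩ := hK.exists_isMinOn hKne hslope
  refine ⟨|dslope f x₀ y|, abs_pos.2 (hslope_ne y hy), fun x hx => ?_⟩
  have hfx : f x = (x - x₀) * dslope f x₀ x := by
    simpa [hx₀] using (sub_smul_dslope f x₀ x).symm
  rw [hfx, abs_mul, mul_comm]
  exact mul_le_mul_of_nonneg_left (hmin hx) (abs_nonneg _)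

theorem intervalIntegrable_abs_sub_rpow {r : ℝ} (hr : -1 < r) (x₀ a b : ℝ) :
    IntervalIntegrable (fun x => |x - x₀| ^ r) volume a b := by
  suffices h : ∀ a b, IntervalIntegrable (fun x => |x| ^ r) volume a b by
    simpa using (h (a - x₀) (b - x₀)).comp_sub_right x₀
  have hpos : ∀ c, 0 ≤ c → IntervalIntegrable (fun x => |x| ^ r) volume 0 c :=
    fun c hc => (intervalIntegral.intervalIntegrable_rpow' hr).congr fun x hx => by
      rw [uIoc_of_le hc] at hx
      simp [abs_of_pos hx.1]
  have h0 : ∀ c, IntervalIntegrable (fun x => |x| ^ r) volume 0 c := by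
    intro c
    rcases le_total 0 c with hc | hc
    · exact hpos c hc
    · refine (IntervalIntegrable.iff_comp_neg (f := fun x => |x| ^ r) (by simp)).2 ?_
      simpa using hpos (-c) (by linarith)
  exact fun a b => (h0 a).symm.trans (h0 b)

theorem intervalIntegrable_inv_sqrt_of_mul_abs_sub_le_abs {f : ℝ → ℝ} {a b x₀ c : ℝ}
    (hc : 0 < c) (hf : Measurable f) (hle : ∀ x ∈ uIcc a b, c * |x - x₀| ≤ |f x|) :
    IntervalIntegrable (fun x => (√(f x))⁻¹) volume a b := by
  refine ((intervalIntegrable_abs_sub_rpow (r := -(1 / 2)) (by norm_num) x₀ a b).const_mul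
    (√c)⁻¹).mono_fun' hf.sqrt.inv.aestronglyMeasurable ?_
  filter_upwards [ae_restrict_mem measurableSet_uIoc, ae_restrict_of_ae (Measure.ae_ne volume x₀)]
    with x hx hne
  have hx₀ : 0 < |x - x₀| := abs_pos.2 (sub_ne_zero.2 hne)
  rw [Real.norm_eq_abs, abs_inv, Real.rpow_neg hx₀.le, ← Real.sqrt_eq_rpow, ← mul_inv,
    ← Real.sqrt_mul hc.le, abs_of_nonneg (Real.sqrt_nonneg _)]
  rcases le_or_gt (f x) 0 with hfx | hfx
  · rw [Real.sqrt_eq_zero'.2 hfx, inv_zero]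
    positivity
  · have := hle x (uIoc_subset_uIcc hx)
    rw [abs_of_pos hfx] at this
    exact inv_anti₀ (by positivity) (Real.sqrt_le_sqrt this)

theorem intervalIntegrable_inv_sqrt_of_hasDerivAt {f : ℝ → ℝ} {a b x₀ d : ℝ} (hf : Continuous f)
    (hd : HasDerivAt f d x₀) (hd0 : d ≠ 0) (hx₀ : f x₀ = 0)
    (hne : ∀ x ∈ uIcc a b, x ≠ x₀ → f x ≠ 0) :
    IntervalIntegrable (fun x => (√(f x))⁻¹) volume a b := by
  obtain ⟨c, hc, hcf⟩ :=
    exists_pos_mul_abs_sub_le_abs isCompact_uIcc hf.continuousOn hd hd0 hx₀ hne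
  exact intervalIntegrable_inv_sqrt_of_mul_abs_sub_le_abs hc hf.measurable hcf

theorem intervalIntegrable_inv_sqrt_of_simple_zeros {f : ℝ → ℝ} {a b da db : ℝ}
    (hf : Continuous f) (hab : a < b) (ha : HasDerivAt f da a) (hda : da ≠ 0)
    (hb : HasDerivAt f db b) (hdb : db ≠ 0) (hfa : f a = 0) (hfb : f b = 0)
    (hne : ∀ x ∈ Ioo a b, f x ≠ 0) :
    IntervalIntegrable (fun x => (√(f x))⁻¹) volume a b := by
  have hm : a < (a + b) / 2 ∧ (a + b) / 2 < b := ⟨by linarith, by linarith⟩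
  refine (intervalIntegrable_inv_sqrt_of_hasDerivAt (b := (a + b) / 2) hf ha hda hfa
    fun x hx hx' => hne x ?_).trans
    (intervalIntegrable_inv_sqrt_of_hasDerivAt hf hb hdb hfb fun x hx hx' => hne x ?_)
  · rw [uIcc_of_le hm.1.le] at hx
    exact ⟨hx.1.lt_of_ne' hx', hx.2.trans_lt hm.2⟩
  · rw [uIcc_of_le hm.2.le] at hx
    exact ⟨hm.1.trans_le hx.1, hx.2.lt_of_ne hx'⟩

section

variable {𝕜 E α : Type*} [RCLike 𝕜] [NormedAddCommGroup E] [NormedSpace ℝ E] [NormedSpace 𝕜 E]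
  [MeasurableSpace α] {μ : Measure α}

/-- Unlike `hasDerivAt_integral_of_dominated_loc_of_lip`, only a Lipschitz bound against `x₀` is
required: `k ↦ √(P_{h,ℓ}(x) + 2 (k - h) (1 - x²))` has no integrable Lipschitz constant near `h`. -/
theorem hasDerivAt_integral_of_dominated_loc_of_lip' {F : 𝕜 → α → E} {F' : α → E} {x₀ : 𝕜}
    {s : Set 𝕜} {bound : α → ℝ} (hs : s ∈ 𝓝 x₀)
    (hF_meas : ∀ x ∈ s, AEStronglyMeasurable (F x) μ) (hF_int : Integrable (F x₀) μ)
    (hF'_meas : AEStronglyMeasurable F' μ)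
    (h_lipsch : ∀ᵐ a ∂μ, ∀ x ∈ s, ‖F x a - F x₀ a‖ ≤ bound a * ‖x - x₀‖)
    (bound_integrable : Integrable bound μ) (h_diff : ∀ᵐ a ∂μ, HasDerivAt (F · a) (F' a) x₀) :
    HasDerivAt (fun x => ∫ a, F x a ∂μ) (∫ a, F' a ∂μ) x₀ := by
  set L : E →L[𝕜] 𝕜 →L[𝕜] E := ContinuousLinearMap.smulRightL 𝕜 𝕜 E 1
  have hLF'_meas := L.continuous.comp_aestronglyMeasurable hF'_meas
  obtain ⟨hLF'_int, key⟩ := hasFDerivAt_integral_of_dominated_loc_of_lip' hs hF_meas hF_int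
    hLF'_meas h_lipsch bound_integrable (h_diff.mono fun a ha => ha.hasFDerivAt)
  have hF'_int : Integrable F' μ := by
    rw [← integrable_norm_iff hLF'_meas] at hLF'_int
    simpa [L, Function.comp_def, integrable_norm_iff hF'_meas] using hLF'_int
  by_cases hE : CompleteSpace E
  · rw [hasDerivAt_iff_hasFDerivAt]
    simpa only [Function.comp_def, ContinuousLinearMap.integral_comp_comm _ hF'_int] using! key
  · simpa [integral, hE] using hasDerivAt_const x₀ (0 : E)

end

theorem hasDerivAt_integral_zero_of_norm_le_indicator_closedBall {E : Type*}
    [NormedAddCommGroup E] [NormedSpace ℝ E] {F : ℝ → ℝ → E} {a b x₀ k₀ C D : ℝ}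
    (hC : 0 ≤ C) (hD : 0 ≤ D)
    (hF : ∀ᶠ k in 𝓝 k₀, ∀ x ∈ Ι a b,
      ‖F k x‖ ≤ (closedBall x₀ (D * |k - k₀|)).indicator (fun _ => C * √|k - k₀|) x) :
    HasDerivAt (fun k => ∫ x in a..b, F k x) 0 k₀ := by
  have hnorm : ∀ᶠ k in 𝓝 k₀, ‖∫ x in a..b, F k x‖ ≤ 2 * D * C * √|k - k₀| * |k - k₀| := by
    filter_upwards [hF] with k hk
    set g := (closedBall x₀ (D * |k - k₀|)).indicator (fun _ => C * √|k - k₀|)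
    have hg : Integrable g := (integrable_indicator_iff measurableSet_closedBall).2
      (integrableOn_const measure_closedBall_lt_top.ne)
    have hg0 : 0 ≤ g := indicator_nonneg fun _ _ => by positivity
    calc ‖∫ x in a..b, F k x‖ ≤ ∫ x in Ι a b, ‖F k x‖ :=
          intervalIntegral.norm_integral_le_integral_norm_uIoc
      _ ≤ ∫ x in Ι a b, g x :=
          integral_mono_of_nonneg (ae_of_all _ fun _ => norm_nonneg _) hg.integrableOn
            ((ae_restrict_mem measurableSet_uIoc).mono hk)
      _ ≤ ∫ x, g x := setIntegral_le_integral hg (ae_of_all _ hg0)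
      _ = 2 * D * C * √|k - k₀| * |k - k₀| := by
          rw [integral_indicator_const _ measurableSet_closedBall,
            Real.volume_real_closedBall (by positivity), smul_eq_mul]
          ring
  rw [hasDerivAt_iff_isLittleO, Asymptotics.isLittleO_iff]
  intro ε hε
  have hF₀ : ∫ x in a..b, F k₀ x = 0 := norm_le_zero_iff.1 (by simpa using hnorm.self_of_nhds)
  have hsmall : ∀ᶠ k in 𝓝 k₀, 2 * D * C * √|k - k₀| ≤ ε :=
    ((show Continuous fun k => 2 * D * C * √|k - k₀| by fun_prop).tendsto k₀).eventually
      (ge_mem_nhds (by simpa using hε))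
  filter_upwards [hnorm, hsmall] with k hk hks
  rw [hF₀, smul_zero, sub_zero, sub_zero, Real.norm_eq_abs]
  exact hk.trans (mul_le_mul_of_nonneg_right hks (abs_nonneg _))

noncomputable def pendulumPoly (h ℓ x : ℝ) : ℝ := 2 * (h - x) * (1 - x ^ 2) - ℓ ^ 2

/-- The integrand of `F(h, ℓ)`; the `max` is dropped, see `Real.sqrt_max_zero`. -/
noncomputable def actionIntegrand (h ℓ x : ℝ) : ℝ := √(pendulumPoly h ℓ x) / (1 - x ^ 2)

section

variable {h k ℓ x : ℝ}

theorem differentiable_pendulumPoly (h ℓ : ℝ) : Differentiable ℝ (pendulumPoly h ℓ) := by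
  unfold pendulumPoly; fun_prop

theorem pendulumPoly_neg_one_neg (hℓ : ℓ ≠ 0) : pendulumPoly h ℓ (-1) < 0 := by
  simp only [pendulumPoly]; norm_num; positivity

theorem pendulumPoly_one_neg (hℓ : ℓ ≠ 0) : pendulumPoly h ℓ 1 < 0 := by
  simp only [pendulumPoly]; norm_num; positivity

theorem pendulumPoly_eq_add (h k ℓ x : ℝ) :
    pendulumPoly k ℓ x = pendulumPoly h ℓ x + 2 * (k - h) * (1 - x ^ 2) := by
  unfold pendulumPoly; ring

theorem measurable_actionIntegrand (h ℓ : ℝ) : Measurable (actionIntegrand h ℓ) := by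
  unfold actionIntegrand pendulumPoly; fun_prop

theorem actionIntegrand_nonneg (hx : x ∈ Icc (-1) 1) : 0 ≤ actionIntegrand h ℓ x :=
  div_nonneg (Real.sqrt_nonneg _) (by nlinarith [hx.1, hx.2])

theorem actionIntegrand_eq_zero (hP : pendulumPoly h ℓ x ≤ 0) : actionIntegrand h ℓ x = 0 := by
  rw [actionIntegrand, Real.sqrt_eq_zero'.2 hP, zero_div]

theorem sq_lt_of_pendulumPoly_pos (hx : x ∈ Icc (-1) 1) (hP : 0 < pendulumPoly k ℓ x) :
    ℓ ^ 2 < 2 * (|k| + 1) * (1 - x ^ 2) := by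
  unfold pendulumPoly at hP
  have hw : 0 ≤ 1 - x ^ 2 := by nlinarith [hx.1, hx.2]
  nlinarith [mul_le_mul_of_nonneg_right (by linarith [le_abs_self k, hx.1] : k - x ≤ |k| + 1) hw]

theorem actionIntegrand_le (hℓ : ℓ ≠ 0) (hx : x ∈ Icc (-1) 1) {A : ℝ}
    (hA : pendulumPoly k ℓ x ≤ A * (1 - x ^ 2)) :
    actionIntegrand k ℓ x ≤ √(2 * A * (|k| + 1)) / |ℓ| := by
  rcases le_or_gt (pendulumPoly k ℓ x) 0 with hP | hP
  · rw [actionIntegrand_eq_zero hP]; positivity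
  have hℓw := sq_lt_of_pendulumPoly_pos hx hP
  have hw : 0 < 1 - x ^ 2 := by nlinarith [sq_nonneg ℓ, abs_nonneg k]
  have hA0 : 0 < A := pos_of_mul_pos_left (hP.trans_le hA) hw.le
  rw [actionIntegrand, div_le_div_iff₀ hw (abs_pos.2 hℓ), ← Real.sqrt_sq_eq_abs,
    ← Real.sqrt_mul hP.le, ← Real.sqrt_sq hw.le, ← Real.sqrt_mul (by positivity)]
  refine Real.sqrt_le_sqrt ?_
  nlinarith [mul_le_mul_of_nonneg_left hℓw.le (by positivity : 0 ≤ A * (1 - x ^ 2)),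
    mul_le_mul_of_nonneg_right hA (sq_nonneg ℓ)]

theorem intervalIntegrable_actionIntegrand (hℓ : ℓ ≠ 0) (k : ℝ) {a b : ℝ}
    (ha : a ∈ Icc (-1) 1) (hb : b ∈ Icc (-1) 1) :
    IntervalIntegrable (actionIntegrand k ℓ) volume a b := by
  refine (intervalIntegrable_const (c := √(2 * (2 * (|k| + 1)) * (|k| + 1)) / |ℓ|)).mono_fun'
    (measurable_actionIntegrand k ℓ).aestronglyMeasurable ?_
  filter_upwards [ae_restrict_mem measurableSet_uIoc] with x hx
  have hx' : x ∈ Icc (-1) 1 := uIcc_subset_Icc ha hb (uIoc_subset_uIcc hx)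
  rw [Real.norm_eq_abs, abs_of_nonneg (actionIntegrand_nonneg hx')]
  refine actionIntegrand_le hℓ hx' ?_
  have hw : 0 ≤ 1 - x ^ 2 := by nlinarith [hx'.1, hx'.2]
  unfold pendulumPoly
  nlinarith [mul_le_mul_of_nonneg_right (by linarith [le_abs_self k, hx'.1] : k - x ≤ |k| + 1) hw,
    sq_nonneg ℓ]

theorem abs_actionIntegrand_sub_le (hw : 0 < 1 - x ^ 2) (hP : 0 < pendulumPoly h ℓ x) (k : ℝ) :
    |actionIntegrand k ℓ x - actionIntegrand h ℓ x| ≤ 2 * (√(pendulumPoly h ℓ x))⁻¹ * |k - h| := by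
  rw [actionIntegrand, actionIntegrand, ← sub_div, abs_div, abs_of_pos hw, div_le_iff₀ hw]
  refine (Real.abs_sqrt_sub_sqrt_le hP _).trans (le_of_eq ?_)
  rw [pendulumPoly_eq_add h k, add_sub_cancel_left, abs_mul, abs_mul, abs_two, abs_of_pos hw]
  ring

theorem hasDerivAt_actionIntegrand (hw : 0 < 1 - x ^ 2) (hP : 0 < pendulumPoly h ℓ x) :
    HasDerivAt (fun k => actionIntegrand k ℓ x) (√(pendulumPoly h ℓ x))⁻¹ h := by
  have hPk : HasDerivAt (fun k => pendulumPoly k ℓ x) (2 * (1 - x ^ 2)) h := by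
    unfold pendulumPoly
    simpa using (((hasDerivAt_id h).sub_const x).const_mul 2).mul_const (1 - x ^ 2)
      |>.sub_const (ℓ ^ 2)
  have hd := (hPk.sqrt hP.ne').div_const (1 - x ^ 2)
  rwa [show 2 * (1 - x ^ 2) / (2 * √(pendulumPoly h ℓ x)) / (1 - x ^ 2)
    = (√(pendulumPoly h ℓ x))⁻¹ by field_simp] at hd

theorem hasDerivAt_integral_actionIntegrand_of_neg (hℓ : ℓ ≠ 0) {a b x₀ d : ℝ}
    (ha : a ∈ Icc (-1) 1) (hb : b ∈ Icc (-1) 1) (hd : HasDerivAt (pendulumPoly h ℓ) d x₀)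
    (hd0 : d ≠ 0) (hx₀ : pendulumPoly h ℓ x₀ = 0)
    (hneg : ∀ x ∈ uIcc a b, x ≠ x₀ → pendulumPoly h ℓ x < 0) :
    HasDerivAt (fun k => ∫ x in a..b, actionIntegrand k ℓ x) 0 h := by
  obtain ⟨c, hc, hcP⟩ := exists_pos_mul_abs_sub_le_abs isCompact_uIcc
    (differentiable_pendulumPoly h ℓ).continuous.continuousOn hd hd0 hx₀
    fun x hx hne => (hneg x hx hne).ne
  have hP : ∀ x ∈ uIcc a b, pendulumPoly h ℓ x ≤ -(c * |x - x₀|) := by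
    intro x hx
    rcases eq_or_ne x x₀ with rfl | hne
    · simp [hx₀]
    · have := hcP x hx
      rw [abs_of_neg (hneg x hx hne)] at this
      linarith
  refine hasDerivAt_integral_zero_of_norm_le_indicator_closedBall (x₀ := x₀)
    (C := √(2 * 2 * (|h| + 2)) / |ℓ|) (D := 2 / c) (by positivity) (by positivity) ?_
  filter_upwards [closedBall_mem_nhds h one_pos] with k hk x hx
  rw [mem_closedBall, Real.dist_eq] at hk
  have hxab := uIoc_subset_uIcc hx
  have hx' := uIcc_subset_Icc ha hb hxab
  have hw : 0 ≤ 1 - x ^ 2 := by nlinarith [hx'.1, hx'.2]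
  have hkh : (k - h) * (1 - x ^ 2) ≤ |k - h| * (1 - x ^ 2) :=
    mul_le_mul_of_nonneg_right (le_abs_self _) hw
  rw [Real.norm_eq_abs, abs_of_nonneg (actionIntegrand_nonneg hx')]
  by_cases hxb : x ∈ closedBall x₀ (2 / c * |k - h|)
  · rw [indicator_of_mem hxb]
    calc actionIntegrand k ℓ x ≤ √(2 * (2 * |k - h|) * (|k| + 1)) / |ℓ| := by
          refine actionIntegrand_le hℓ hx' ?_
          rw [pendulumPoly_eq_add h]
          nlinarith [hP x hxab, abs_nonneg (x - x₀)]
      _ ≤ √(2 * 2 * (|h| + 2)) / |ℓ| * √|k - h| := by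
          rw [div_mul_eq_mul_div, ← Real.sqrt_mul (by positivity)]
          gcongr ?_ / _
          refine Real.sqrt_le_sqrt ?_
          have : |k| ≤ |h| + 1 := by linarith [abs_sub_abs_le_abs_sub k h]
          nlinarith [abs_nonneg (k - h)]
  · rw [indicator_of_notMem hxb]
    refine (actionIntegrand_eq_zero ?_).le
    rw [mem_closedBall, Real.dist_eq, not_le, div_mul_eq_mul_div, div_lt_iff₀ hc] at hxb
    rw [pendulumPoly_eq_add h]
    nlinarith [hP x hxab,
      mul_le_mul_of_nonneg_left (by nlinarith : 1 - x ^ 2 ≤ 1) (abs_nonneg (k - h))]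

theorem hasDerivAt_integral_actionIntegrand_of_pos {a b : ℝ} (hab : a ≤ b) (ha : -1 < a)
    (hb : b < 1) (hpos : ∀ x ∈ Ioo a b, 0 < pendulumPoly h ℓ x)
    (hint : IntervalIntegrable (fun x => (√(pendulumPoly h ℓ x))⁻¹) volume a b) :
    HasDerivAt (fun k => ∫ x in a..b, actionIntegrand k ℓ x)
      (∫ x in a..b, (√(pendulumPoly h ℓ x))⁻¹) h := by
  have hw : ∀ x ∈ Icc a b, 0 < 1 - x ^ 2 := fun x hx => by nlinarith [hx.1, hx.2]
  have hPc := (differentiable_pendulumPoly h ℓ).continuous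
  simp only [intervalIntegral.integral_of_le hab, integral_Ioc_eq_integral_Ioo]
  rw [intervalIntegrable_iff_integrableOn_Ioo_of_le hab] at hint
  refine hasDerivAt_integral_of_dominated_loc_of_lip'
    (bound := fun x => 2 * (√(pendulumPoly h ℓ x))⁻¹) univ_mem
    (fun k _ => (measurable_actionIntegrand k ℓ).aestronglyMeasurable) ?_
    hPc.measurable.sqrt.inv.aestronglyMeasurable ?_ (hint.const_mul 2) ?_
  · refine (ContinuousOn.integrableOn_Icc ?_).mono_set Ioo_subset_Icc_self
    exact hPc.sqrt.continuousOn.div (by fun_prop) fun x hx => (hw x hx).ne'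
  · filter_upwards [ae_restrict_mem measurableSet_Ioo] with x hx k _
    exact abs_actionIntegrand_sub_le (hw x (Ioo_subset_Icc_self hx)) (hpos x hx) k
  · filter_upwards [ae_restrict_mem measurableSet_Ioo] with x hx
    exact hasDerivAt_actionIntegrand (hw x (Ioo_subset_Icc_self hx)) (hpos x hx)

end

theorem action_hasDerivAt_h (h ℓ xm xp : ℝ) (hℓ : ℓ ≠ 0)
    (h₁ : -1 < xm) (h₂ : xm < xp) (h₃ : xp < 1)
    (hzm : 2 * (h - xm) * (1 - xm ^ 2) - ℓ ^ 2 = 0)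
    (hzp : 2 * (h - xp) * (1 - xp ^ 2) - ℓ ^ 2 = 0)
    (hpos : ∀ x ∈ Set.Ioo xm xp, 0 < 2 * (h - x) * (1 - x ^ 2) - ℓ ^ 2)
    (hneg : ∀ x, x ∈ Set.Ioo (-1 : ℝ) xm ∪ Set.Ioo xp 1 →
      2 * (h - x) * (1 - x ^ 2) - ℓ ^ 2 < 0)
    (hdm : 0 < deriv (fun x => 2 * (h - x) * (1 - x ^ 2) - ℓ ^ 2) xm)
    (hdp : deriv (fun x => 2 * (h - x) * (1 - x ^ 2) - ℓ ^ 2) xp < 0) :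
    HasDerivAt
      (fun h' : ℝ =>
        ∫ x in (-1 : ℝ)..1, Real.sqrt (max (2 * (h' - x) * (1 - x ^ 2) - ℓ ^ 2) 0) / (1 - x ^ 2))
      (∫ x in xm..xp, (Real.sqrt (2 * (h - x) * (1 - x ^ 2) - ℓ ^ 2))⁻¹) h := by
  have hP := differentiable_pendulumPoly h ℓ
  have hm1 : (-1 : ℝ) ∈ Icc (-1) 1 := ⟨le_rfl, by norm_num⟩
  have h1 : (1 : ℝ) ∈ Icc (-1) 1 := ⟨by norm_num, le_rfl⟩
  have hxm : xm ∈ Icc (-1) 1 := ⟨h₁.le, by linarith⟩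
  have hxp : xp ∈ Icc (-1) 1 := ⟨by linarith, h₃.le⟩
  have hleft : ∀ x ∈ uIcc (-1) xm, x ≠ xm → pendulumPoly h ℓ x < 0 := by
    intro x hx hne
    rw [uIcc_of_le h₁.le] at hx
    rcases hx.1.eq_or_lt with rfl | hx1
    exacts [pendulumPoly_neg_one_neg hℓ, hneg x (Or.inl ⟨hx1, hx.2.lt_of_ne hne⟩)]
  have hright : ∀ x ∈ uIcc xp 1, x ≠ xp → pendulumPoly h ℓ x < 0 := by
    intro x hx hne
    rw [uIcc_of_le h₃.le] at hx
    rcases hx.2.eq_or_lt with rfl | hx1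
    exacts [pendulumPoly_one_neg hℓ, hneg x (Or.inr ⟨hx.1.lt_of_ne' hne, hx1⟩)]
  have hsplit : ∀ k, ∫ x in (-1 : ℝ)..1, √(max (pendulumPoly k ℓ x) 0) / (1 - x ^ 2) =
      (∫ x in (-1 : ℝ)..xm, actionIntegrand k ℓ x) + (∫ x in xm..xp, actionIntegrand k ℓ x)
        + ∫ x in xp..1, actionIntegrand k ℓ x := by
    intro k
    have hI := fun {a b : ℝ} => intervalIntegrable_actionIntegrand (a := a) (b := b) hℓ k
    simp only [Real.sqrt_max_zero]
    rw [intervalIntegral.integral_add_adjacent_intervals (hI hm1 hxm) (hI hxm hxp),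
      intervalIntegral.integral_add_adjacent_intervals (hI hm1 hxp) (hI hxp h1)]
    rfl
  change HasDerivAt (fun k => ∫ x in (-1 : ℝ)..1, √(max (pendulumPoly k ℓ x) 0) / (1 - x ^ 2))
    (∫ x in xm..xp, (√(pendulumPoly h ℓ x))⁻¹) h
  simp only [hsplit]
  simpa using ((hasDerivAt_integral_actionIntegrand_of_neg hℓ hm1 hxm (hP xm).hasDerivAt
      hdm.ne' hzm hleft).fun_add
    (hasDerivAt_integral_actionIntegrand_of_pos h₂.le h₁ h₃ hpos
      (intervalIntegrable_inv_sqrt_of_simple_zeros hP.continuous h₂ (hP xm).hasDerivAt hdm.ne'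
        (hP xp).hasDerivAt hdp.ne hzm hzp fun x hx => (hpos x hx).ne'))).fun_add
    (hasDerivAt_integral_actionIntegrand_of_neg hℓ hxp h1 (hP xp).hasDerivAt hdp.ne hzp hright)
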